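/- In the fixed heterogeneous ensemble setting (parameters \tau^\kappa, m^\kappa > 0, M = \sum m^\kappa, \sigma^\kappa = \sigma_0/(m^\kappa)^2, \gamma^\kappa = m^\kappa/\tau^\kappa, independent Wiener processes W^\kappa, X^\kappa_t = e^{-t/\tau^\kappa} W^\kappa_{\sigma^\kappa\tau^\kappa(e^{2t/\tau^\kappa}-1)}, Z_t = \sum_{\kappa=1}^N (m^\kappa/M) X^\kappa_t), define for t > 0 the effective relaxation time \tau_{eff}(t) = [ (\sum_{\kappa} \tau^\kappa(1-e^{-2t/\tau^\kappa})) / (\sum_{\kappa} (1-e^{-2t/\tau^\kappa})/\tau^\kappa) ]^{1/2}. Then for every t > 0 the random variables \sum_{\kappa=1}^N \gamma^\kappa X^\kappa_t and (M/\tau_{eff}(t))\, Z_t have the same (centered Gaussian) law. This is the key identity by which the drift of the centre-of-mass like process is expressed as -Z_t/\tau_{eff}(t), making Z_t equal in distribution to the solution of a non-autonomous stochastic differential equation with time-dependent drift coefficient 1/\tau_{eff}(t). -/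

import Mathlib

open MeasureTheory ProbabilityTheory

/-!
Fix `t > 0`. The variables `X^κ_t` are independent centred Gaussians of variance
`v^κ = σ^κ τ^κ (1 - e^{-2t/τ^κ})`, and `(M / τ_eff) Z_t = ∑_κ (m^κ / τ_eff) X^κ_t`, so both sides
are centred Gaussians, of variances `∑ (γ^κ)² v^κ = σ₀ B` and `∑ (m^κ / τ_eff)² v^κ = σ₀ A / τ_eff²`
with `A = ∑ τ^κ (1 - e^{-2t/τ^κ})` and `B = ∑ (1 - e^{-2t/τ^κ}) / τ^κ`. Since `τ_eff² = A / B`,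
these agree.
-/

open Real
open scoped NNReal

namespace ProbabilityTheory

variable {Ω ι : Type*} {mΩ : MeasurableSpace Ω} {P : Measure Ω} [IsProbabilityMeasure P]
  {Y : ι → Ω → ℝ}

lemma iIndepFun.hasLaw_sum_gaussianReal (hind : iIndepFun Y P) {m : ι → ℝ} {v : ι → ℝ≥0}
    (hY : ∀ i, HasLaw (Y i) (gaussianReal (m i) (v i)) P) (s : Finset ι) :
    HasLaw (∑ i ∈ s, Y i) (gaussianReal (∑ i ∈ s, m i) (∑ i ∈ s, v i)) P := by
  classical
  induction s using Finset.induction_on with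
  | empty =>
    simpa [gaussianReal_zero_var] using hasLaw_dirac_of_ae_eq (P := P) (X := 0) (x := 0) (by rfl)
  | insert i s hi ih =>
    rw [Finset.sum_insert hi, Finset.sum_insert hi, Finset.sum_insert hi]
    have hindep : IndepFun (Y i) (∑ j ∈ s, Y j) P :=
      (hind.indepFun_finsetSum_of_notMem₀ (fun j => (hY j).aemeasurable) hi).symm
    exact ⟨(hY i).aemeasurable.add ih.aemeasurable,
      gaussianReal_add_gaussianReal_of_indepFun hindep (hY i).map_eq ih.map_eq⟩

lemma iIndepFun.hasLaw_sum_const_mul_gaussianReal [Fintype ι] (hind : iIndepFun Y P)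
    {m : ι → ℝ} {v : ι → ℝ≥0} (hY : ∀ i, HasLaw (Y i) (gaussianReal (m i) (v i)) P)
    (c : ι → ℝ) :
    HasLaw (fun ω => ∑ i, c i * Y i ω)
      (gaussianReal (∑ i, c i * m i) (∑ i, .mk (c i ^ 2) (sq_nonneg _) * v i)) P := by
  have hcY : iIndepFun (fun i ω => c i * Y i ω) P :=
    hind.comp (fun i x => c i * x) fun i => measurable_const_mul (c i)
  convert hcY.hasLaw_sum_gaussianReal (fun i => gaussianReal_const_mul (hY i) (c i))
    Finset.univ using 1
  funext ω
  simp

lemma iIndepFun.map_sum_const_mul_eq [Fintype ι] (hind : iIndepFun Y P) {v : ι → ℝ≥0}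
    (hY : ∀ i, HasLaw (Y i) (gaussianReal 0 (v i)) P) {c d : ι → ℝ}
    (hcd : ∑ i, c i ^ 2 * (v i : ℝ) = ∑ i, d i ^ 2 * v i) :
    P.map (fun ω => ∑ i, c i * Y i ω) = P.map (fun ω => ∑ i, d i * Y i ω) := by
  rw [(hind.hasLaw_sum_const_mul_gaussianReal hY c).map_eq,
    (hind.hasLaw_sum_const_mul_gaussianReal hY d).map_eq]
  congr 1
  · simp
  · ext
    push_cast
    exact hcd

end ProbabilityTheory

/-- The time at which `W^κ` is read off in `X^κ_t = e^{-t/τ^κ} W^κ_{σ^κ τ^κ (e^{2t/τ^κ} - 1)}`. -/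
noncomputable def ouClock (σ τ t : ℝ) : ℝ := σ * τ * (exp (2 * t / τ) - 1)

noncomputable def ouVariance (σ τ t : ℝ) : ℝ := σ * τ * (1 - exp (-2 * t / τ))

lemma ouClock_nonneg {σ τ t : ℝ} (hσ : 0 ≤ σ) (hτ : 0 < τ) (ht : 0 ≤ t) :
    0 ≤ ouClock σ τ t :=
  mul_nonneg (by positivity) (sub_nonneg.mpr (one_le_exp (by positivity)))

lemma exp_neg_div_sq_mul_ouClock (σ τ t : ℝ) :
    exp (-t / τ) ^ 2 * ouClock σ τ t = ouVariance σ τ t := by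
  have hsq : exp (-t / τ) ^ 2 = exp (-2 * t / τ) := by
    rw [← exp_nat_mul]
    ring_nf
  have hcancel : exp (-2 * t / τ) * exp (2 * t / τ) = 1 := by
    rw [← exp_add]
    ring_nf
    exact exp_zero
  rw [ouClock, ouVariance, hsq]
  linear_combination σ * τ * hcancel

lemma ouVariance_nonneg {σ τ t : ℝ} (hσ : 0 ≤ σ) (hτ : 0 < τ) (ht : 0 ≤ t) :
    0 ≤ ouVariance σ τ t := by
  rw [← exp_neg_div_sq_mul_ouClock]
  exact mul_nonneg (sq_nonneg _) (ouClock_nonneg hσ hτ ht)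

lemma hasLaw_exp_neg_div_mul_gaussianReal_ouClock {Ω : Type*} {mΩ : MeasurableSpace Ω}
    {P : Measure Ω} {W : Ω → ℝ} {σ τ t : ℝ}
    (hW : HasLaw W (gaussianReal 0 (ouClock σ τ t).toNNReal) P) :
    HasLaw (fun ω => exp (-t / τ) * W ω) (gaussianReal 0 (ouVariance σ τ t).toNNReal) P := by
  convert gaussianReal_const_mul hW (exp (-t / τ)) using 2
  · simp
  · rw [← exp_neg_div_sq_mul_ouClock, Real.toNNReal_mul (sq_nonneg _)]
    ext
    simp [sq_nonneg]

lemma one_sub_exp_neg_two_mul_div_pos {τ t : ℝ} (hτ : 0 < τ) (ht : 0 < t) :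
    0 < 1 - exp (-2 * t / τ) := by
  have : -2 * t / τ < 0 := div_neg_of_neg_of_pos (by linarith) hτ
  linarith [exp_lt_one_iff.mpr this]

lemma sum_sq_mul_ouVariance_eq_div_sqrt {ι : Type*} [Fintype ι] [Nonempty ι] {τ m : ι → ℝ}
    (hτ : ∀ i, 0 < τ i) (hm : ∀ i, m i ≠ 0) (σ₀ : ℝ) {t : ℝ} (ht : 0 < t) :
    ∑ i, (m i / τ i) ^ 2 * ouVariance (σ₀ / m i ^ 2) (τ i) t =
      ∑ i, (m i / √((∑ i, τ i * (1 - exp (-2 * t / τ i))) /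
        ∑ i, (1 - exp (-2 * t / τ i)) / τ i)) ^ 2 * ouVariance (σ₀ / m i ^ 2) (τ i) t := by
  set A := ∑ i, τ i * (1 - exp (-2 * t / τ i))
  set B := ∑ i, (1 - exp (-2 * t / τ i)) / τ i
  have hA : 0 < A := Finset.sum_pos (fun i _ =>
    mul_pos (hτ i) (one_sub_exp_neg_two_mul_div_pos (hτ i) ht)) Finset.univ_nonempty
  have hB : 0 < B := Finset.sum_pos (fun i _ =>
    div_pos (one_sub_exp_neg_two_mul_div_pos (hτ i) ht) (hτ i)) Finset.univ_nonempty
  have hl : ∀ i, (m i / τ i) ^ 2 * ouVariance (σ₀ / m i ^ 2) (τ i) t =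
      σ₀ * ((1 - exp (-2 * t / τ i)) / τ i) := fun i => by
    rw [ouVariance]
    field_simp [hm i, (hτ i).ne']
  have hr : ∀ i, (m i / √(A / B)) ^ 2 * ouVariance (σ₀ / m i ^ 2) (τ i) t =
      σ₀ * (B / A) * (τ i * (1 - exp (-2 * t / τ i))) := fun i => by
    rw [div_pow, sq_sqrt (div_pos hA hB).le, ouVariance]
    field_simp [hm i]
  rw [Finset.sum_congr rfl fun i _ => hl i, Finset.sum_congr rfl fun i _ => hr i,
    ← Finset.mul_sum, ← Finset.mul_sum]
  show σ₀ * B = σ₀ * (B / A) * A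
  field_simp

theorem drift_effective_relaxation_time_general
    {Ω : Type*} [MeasurableSpace Ω] (μ : Measure Ω) [IsProbabilityMeasure μ]
    (N : ℕ) (hN : 0 < N)
    (τ m : Fin N → ℝ) (hτ : ∀ κ, 0 < τ κ) (hm : ∀ κ, 0 < m κ)
    (σ₀ : ℝ) (hσ₀ : 0 < σ₀)
    (M : ℝ) (hM : M = ∑ κ, m κ)
    (σ : Fin N → ℝ) (hσ : ∀ κ, σ κ = σ₀ / (m κ) ^ 2)
    (γ : Fin N → ℝ) (hγ : ∀ κ, γ κ = m κ / τ κ)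
    (W : Fin N → ℝ → Ω → ℝ)
    (hWmeas : ∀ κ u, Measurable (W κ u))
    -- each `W^κ` is a centered Gaussian process:
    (hWgauss : ∀ κ u, 0 ≤ u → Measure.map (W κ u) μ = gaussianReal 0 (Real.toNNReal u))
    -- the Wiener processes are independent:
    (hindep : iIndepFun (fun κ ω => fun u => W κ u ω) μ)
    (X : Fin N → ℝ → Ω → ℝ)
    (hX : ∀ κ t ω, X κ t ω =
      Real.exp (-t / τ κ) * W κ (σ κ * τ κ * (Real.exp (2 * t / τ κ) - 1)) ω)
    (Z : ℝ → Ω → ℝ)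
    (hZ : ∀ t ω, Z t ω = ∑ κ, (m κ / M) * X κ t ω)
    (τeff : ℝ → ℝ)
    (hτeff : ∀ t, τeff t = Real.sqrt
      ((∑ κ, τ κ * (1 - Real.exp (-2 * t / τ κ))) /
        (∑ κ, (1 - Real.exp (-2 * t / τ κ)) / τ κ))) :
    ∀ t : ℝ, 0 < t →
      Measure.map (fun ω => ∑ κ, γ κ * X κ t ω) μ =
        Measure.map (fun ω => (M / τeff t) * Z t ω) μ := by
  intro t ht
  have : Nonempty (Fin N) := Fin.pos_iff_nonempty.mp hN
  have hσ_nonneg : ∀ κ, 0 ≤ σ κ := fun κ => by rw [hσ]; positivity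
  have hlaw : ∀ κ, HasLaw (X κ t) (gaussianReal 0 (ouVariance (σ κ) (τ κ) t).toNNReal) μ := by
    intro κ
    rw [show X κ t = _ from funext (hX κ t)]
    exact hasLaw_exp_neg_div_mul_gaussianReal_ouClock ⟨(hWmeas κ _).aemeasurable,
      hWgauss κ _ (ouClock_nonneg (hσ_nonneg κ) (hτ κ) ht.le)⟩
  have hXind : iIndepFun (fun κ => X κ t) μ := by
    convert hindep.comp (fun κ (w : ℝ → ℝ) => exp (-t / τ κ) * w (ouClock (σ κ) (τ κ) t))
      fun κ => (measurable_pi_apply _).const_mul _ using 1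
    funext κ ω
    exact hX κ t ω
  have hM0 : M ≠ 0 := hM ▸ (Finset.sum_pos (fun κ _ => hm κ) Finset.univ_nonempty).ne'
  have hZt : (fun ω => M / τeff t * Z t ω) = fun ω => ∑ κ, m κ / τeff t * X κ t ω := by
    funext ω
    rw [hZ, Finset.mul_sum]
    congr! 1 with κ
    field_simp
  rw [hZt]
  refine hXind.map_sum_const_mul_eq hlaw ?_
  have hvar : ∀ κ,
      ((ouVariance (σ κ) (τ κ) t).toNNReal : ℝ) = ouVariance (σ₀ / m κ ^ 2) (τ κ) t :=
    fun κ => by rw [Real.coe_toNNReal _ (ouVariance_nonneg (hσ_nonneg κ) (hτ κ) ht.le), hσ]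
  simp_rw [hvar, hγ, hτeff]
  exact sum_sq_mul_ouVariance_eq_div_sqrt hτ (fun κ => (hm κ).ne') σ₀ ht

/-- Key identity behind the non-autonomous SDE for the centre-of-mass like process: in the
fixed heterogeneous ensemble (`τ^κ, m^κ > 0`, `M = ∑ m^κ`, `σ^κ = σ₀/(m^κ)²`,
`γ^κ = m^κ/τ^κ`, independent Wiener processes,
`X^κ_t = e^{-t/τ^κ} W^κ_{σ^κ τ^κ (e^{2t/τ^κ}-1)}`, `Z_t = ∑_κ (m^κ/M) X^κ_t`), with the
effective relaxation time
`τ_eff(t) = [(∑_κ τ^κ (1-e^{-2t/τ^κ})) / (∑_κ (1-e^{-2t/τ^κ})/τ^κ)]^{1/2}`,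
for every `t > 0` the random variables `∑_κ γ^κ X^κ_t` and `(M/τ_eff(t)) Z_t` have the
same (centered Gaussian) law. -/
theorem drift_effective_relaxation_time
    {Ω : Type*} [MeasurableSpace Ω] (μ : Measure Ω) [IsProbabilityMeasure μ]
    (N : ℕ) (hN : 0 < N)
    (τ m : Fin N → ℝ) (hτ : ∀ κ, 0 < τ κ) (hm : ∀ κ, 0 < m κ)
    (σ₀ : ℝ) (hσ₀ : 0 < σ₀)
    (M : ℝ) (hM : M = ∑ κ, m κ)
    (σ : Fin N → ℝ) (hσ : ∀ κ, σ κ = σ₀ / (m κ) ^ 2)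
    (γ : Fin N → ℝ) (hγ : ∀ κ, γ κ = m κ / τ κ)
    (W : Fin N → ℝ → Ω → ℝ)
    (hWmeas : ∀ κ u, Measurable (W κ u))
    -- each `W^κ` is a centered Gaussian process:
    (hWgauss : ∀ κ u, 0 ≤ u → Measure.map (W κ u) μ = gaussianReal 0 (Real.toNNReal u))
    (hWcov : ∀ κ u v, 0 ≤ u → 0 ≤ v → ∫ ω, W κ u ω * W κ v ω ∂μ = min u v)
    -- the Wiener processes are independent:
    (hindep : iIndepFun (fun κ ω => fun u => W κ u ω) μ)
    (X : Fin N → ℝ → Ω → ℝ)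
    (hX : ∀ κ t ω, X κ t ω =
      Real.exp (-t / τ κ) * W κ (σ κ * τ κ * (Real.exp (2 * t / τ κ) - 1)) ω)
    (Z : ℝ → Ω → ℝ)
    (hZ : ∀ t ω, Z t ω = ∑ κ, (m κ / M) * X κ t ω)
    (τeff : ℝ → ℝ)
    (hτeff : ∀ t, τeff t = Real.sqrt
      ((∑ κ, τ κ * (1 - Real.exp (-2 * t / τ κ))) /
        (∑ κ, (1 - Real.exp (-2 * t / τ κ)) / τ κ))) :
    ∀ t : ℝ, 0 < t →
      Measure.map (fun ω => ∑ κ, γ κ * X κ t ω) μ =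
        Measure.map (fun ω => (M / τeff t) * Z t ω) μ :=
  drift_effective_relaxation_time_general μ N hN τ m hτ hm σ₀ hσ₀ M hM σ hσ γ hγ W hWmeas hWgauss
    hindep X hX Z hZ τeff hτeff
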